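/- Let G be an abelian lattice-ordered group with strong unit u such that the MV-algebra M = Γ(G,u) is σ-complete (every countable subset of M has a supremum in M). Then for every a ∈ M one has M = a^⊥ ⊕ a^⊥⊥, i.e. every x ∈ M can be written as x = b ⊕ c with b ∈ a^⊥ and c ∈ a^⊥⊥; in particular, a^⊥ is a summand-ideal of M (M is projectable). -/
import Mathlib


variable {G : Type*} [Lattice G] [AddCommGroup G]
  [CovariantClass G G (· + ·) (· ≤ ·)]
  [CovariantClass G G (Function.swap (· + ·)) (· ≤ ·)]

/-- `u` is a strong unit of the lattice-ordered group `G`. -/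
def IsStrongUnit (u : G) : Prop := 0 ≤ u ∧ ∀ x : G, ∃ n : ℕ, x ≤ n • u

/-- The operation `x ⊕ y := (x + y) ⊓ u` of the pseudo MV-algebra `Γ(G,u)`. -/
def oplus (u x y : G) : G := (x + y) ⊓ u

/-- The operation `x ⊙ y := (x - u + y) ⊔ 0` of the pseudo MV-algebra `Γ(G,u)`. -/
def odot (u x y : G) : G := (x - u + y) ⊔ 0

/-- `n.x := x ⊕ ⋯ ⊕ x` (`n` summands), with `0.x = 0`. -/
def nOplus (u : G) : ℕ → G → G
  | 0, _ => 0
  | n + 1, x => oplus u (nOplus u n x) x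

/-- `I` is an ideal of the pseudo MV-algebra with carrier `C ⊆ Γ(G,u)`:
a nonempty subset of `C`, downward closed within `C`, and closed under `⊕`. -/
def IsIdealIn (u : G) (C I : Set G) : Prop :=
  I ⊆ C ∧ I.Nonempty ∧ (∀ x ∈ I, ∀ y ∈ C, y ≤ x → y ∈ I) ∧
    ∀ x ∈ I, ∀ y ∈ I, oplus u x y ∈ I

/-- `I` is a normal ideal: `x ⊕ I = I ⊕ x` for all `x ∈ C`. -/
def IsNormalIdealIn (u : G) (C I : Set G) : Prop :=
  IsIdealIn u C I ∧ ∀ x ∈ C, (fun i => oplus u x i) '' I = (fun i => oplus u i x) '' I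

/-- `⟨X⟩_n`, the smallest normal ideal (of the carrier `C`) containing `X`. -/
def normalGenIn (u : G) (C X : Set G) : Set G :=
  ⋂₀ {I | IsNormalIdealIn u C I ∧ X ⊆ I}

/-- The polar `X^⊥ = {y ∈ C : y ∧ x = 0 for all x ∈ X}` computed in carrier `C`. -/
def polarIn (C X : Set G) : Set G := {y ∈ C | ∀ x ∈ X, y ⊓ x = 0}

/-- `A ⊕ B := {a ⊕ b : a ∈ A, b ∈ B}`. -/
def setOplus (u : G) (A B : Set G) : Set G := Set.image2 (oplus u) A B

/-- `↓a` computed within the carrier `C`. -/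
def dsetIn (C : Set G) (a : G) : Set G := {x ∈ C | x ≤ a}

/-- `I` is a summand-ideal of the carrier `C`: a normal ideal such that for
some normal ideal `J`, `I ∩ J = {0}` and `⟨I ∪ J⟩_n = C`. -/
def IsSummandIdealIn (u : G) (C I : Set G) : Prop :=
  IsNormalIdealIn u C I ∧ ∃ J, IsNormalIdealIn u C J ∧ I ∩ J = {0} ∧
    normalGenIn u C (I ∪ J) = C

/-- `I` is a polar ideal of the carrier `C`: `I = I^⊥⊥`. -/
def IsPolarIdealIn (C I : Set G) : Prop := polarIn C (polarIn C I) = I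

/-- `a` is a Boolean element of the carrier `C`: `a ∈ C` and `a ⊕ a = a`. -/
def IsBooleanIn (u : G) (C : Set G) (a : G) : Prop := a ∈ C ∧ oplus u a a = a

/-- The carrier `C` is strongly projectable: every polar ideal is a summand-ideal. -/
def IsStronglyProjectableIn (u : G) (C : Set G) : Prop :=
  ∀ I : Set G, IsPolarIdealIn C I → IsSummandIdealIn u C I

/-- `N` is a subalgebra of `Γ(G,u)`: contains `0` and `u`, closed under `⊕`,
`x⁻ = u - x` and `x∼ = -x + u`. -/
def IsSubalg (u : G) (N : Set G) : Prop :=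
  N ⊆ Set.Icc 0 u ∧ 0 ∈ N ∧ u ∈ N ∧
    (∀ x ∈ N, ∀ y ∈ N, oplus u x y ∈ N) ∧
    (∀ x ∈ N, u - x ∈ N) ∧ (∀ x ∈ N, -x + u ∈ N)

/-- `N` is a large subalgebra of `Γ(G,u)`: for every nonzero `y ∈ Γ(G,u)` there
are `n ∈ ℕ` and a nonzero `x ∈ N` with `x ≤ n.y`. -/
def IsLargeSubalg (u : G) (N : Set G) : Prop :=
  IsSubalg u N ∧ ∀ y ∈ Set.Icc (0 : G) u, y ≠ 0 →
    ∃ n : ℕ, ∃ x ∈ N, x ≠ 0 ∧ x ≤ nOplus u n y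

lemma aux_inf_add_le {x a b : G} (hx : 0 ≤ x) (ha : 0 ≤ a) (hb : 0 ≤ b) :
    x ⊓ (a + b) ≤ x ⊓ a + x ⊓ b := by
  rw [inf_add, add_inf, add_inf]
  exact le_inf (le_inf (inf_le_left.trans (le_add_of_nonneg_right hx))
      (inf_le_left.trans (le_add_of_nonneg_right hb)))
    (le_inf (inf_le_left.trans (le_add_of_nonneg_left ha)) inf_le_right)

lemma aux_inf_nsmul {x a : G} (hx : 0 ≤ x) (ha : 0 ≤ a) (h : x ⊓ a = 0) :
    ∀ n : ℕ, x ⊓ (n • a) = 0 := by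
  intro n
  induction n with
  | zero => rw [zero_nsmul]; exact inf_eq_right.mpr hx
  | succ n ih =>
    refine le_antisymm ?_ (le_inf hx (nsmul_nonneg ha _))
    calc x ⊓ ((n+1) • a) = x ⊓ (n • a + a) := by rw [succ_nsmul]
      _ ≤ x ⊓ (n • a) + x ⊓ a := aux_inf_add_le hx (nsmul_nonneg ha n) ha
      _ = 0 := by rw [ih, h, add_zero]

theorem stmt12 (u : G) (hu : IsStrongUnit u)
    (hσ : ∀ S : Set G, S ⊆ Set.Icc (0 : G) u → S.Countable → ∃ s ∈ Set.Icc (0 : G) u, IsLUB S s) :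
    ∀ a ∈ Set.Icc (0 : G) u,
      setOplus u (polarIn (Set.Icc (0 : G) u) {a}) (polarIn (Set.Icc (0 : G) u) (polarIn (Set.Icc (0 : G) u) {a}))
          = Set.Icc (0 : G) u ∧
        (∀ x ∈ Set.Icc (0 : G) u, ∃ b ∈ polarIn (Set.Icc (0 : G) u) {a},
          ∃ c ∈ polarIn (Set.Icc (0 : G) u) (polarIn (Set.Icc (0 : G) u) {a}), x = oplus u b c) ∧
        IsSummandIdealIn u (Set.Icc (0 : G) u) (polarIn (Set.Icc (0 : G) u) {a}) := by
  letI : DistribLattice G := AddCommGroup.toDistribLattice G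
  intro a ha
  set C : Set G := Set.Icc (0:G) u with hCdef
  have hu0 : (0:G) ≤ u := ha.1.trans ha.2
  -- polars of subsets of C are normal ideals
  have hpolar : ∀ X : Set G, X ⊆ C → IsNormalIdealIn u C (polarIn C X) := by
    intro X hX
    constructor
    · refine ⟨fun y hy => hy.1,
        ⟨0, ⟨le_refl (0:G), hu0⟩, fun z hz => inf_eq_left.mpr (hX hz).1⟩, ?_, ?_⟩
      · intro x hx y hy hyx
        refine ⟨hy, fun z hz => le_antisymm ?_ (le_inf hy.1 (hX hz).1)⟩
        calc y ⊓ z ≤ x ⊓ z := inf_le_inf_right z hyx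
          _ = 0 := hx.2 z hz
      · intro x hx y hy
        refine ⟨⟨le_inf (add_nonneg hx.1.1 hy.1.1) hu0, inf_le_right⟩,
          fun z hz => le_antisymm ?_
            (le_inf (le_inf (add_nonneg hx.1.1 hy.1.1) hu0) (hX hz).1)⟩
        calc oplus u x y ⊓ z ≤ (x + y) ⊓ z := inf_le_inf_right z inf_le_left
          _ = z ⊓ (x + y) := inf_comm _ _
          _ ≤ z ⊓ x + z ⊓ y := aux_inf_add_le (hX hz).1 hx.1.1 hy.1.1
          _ = x ⊓ z + y ⊓ z := by rw [inf_comm z x, inf_comm z y]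
          _ = 0 := by rw [hx.2 z hz, hy.2 z hz, add_zero]
    · intro x _
      have hfe : (fun i => oplus u x i) = (fun i => oplus u i x) := by
        funext i; simp [oplus, add_comm]
      rw [hfe]
  have haC : ({a} : Set G) ⊆ C := by rintro _ rfl; exact ha
  have hI : IsNormalIdealIn u C (polarIn C {a}) := hpolar {a} haC
  have hIC : polarIn C {a} ⊆ C := fun y hy => hy.1
  have hJ : IsNormalIdealIn u C (polarIn C (polarIn C {a})) := hpolar _ hIC
  have hJC : polarIn C (polarIn C {a}) ⊆ C := fun y hy => hy.1
  -- the supremum e of the multiples of a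
  obtain ⟨e, heC, heL⟩ := hσ (Set.range fun n : ℕ => n • a ⊓ u)
    (by rintro _ ⟨n, rfl⟩; exact ⟨le_inf (nsmul_nonneg ha.1 n) hu0, inf_le_right⟩)
    (Set.countable_range _)
  have hsle : ∀ n : ℕ, n • a ⊓ u ≤ e := fun n => heL.1 ⟨n, rfl⟩
  have hue0 : (0:G) ≤ u - e := sub_nonneg.mpr heC.2
  have key2 : a ⊓ (u - e) = 0 := by
    have ht0 : 0 ≤ a ⊓ (u - e) := le_inf ha.1 hue0
    have hstep : ∀ n : ℕ, a ⊓ (u - e) + (n • a ⊓ u) ≤ e := by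
      intro n
      have h1 : a ⊓ (u - e) + (n • a ⊓ u) ≤ (n+1) • a := by
        calc a ⊓ (u - e) + (n • a ⊓ u) ≤ a + n • a := add_le_add inf_le_left inf_le_left
          _ = (n+1) • a := by rw [succ_nsmul, add_comm]
      have h2 : a ⊓ (u - e) + (n • a ⊓ u) ≤ u := by
        calc a ⊓ (u - e) + (n • a ⊓ u) ≤ (u - e) + e := add_le_add inf_le_right (hsle n)
          _ = u := sub_add_cancel u e
      exact le_trans (le_inf h1 h2) (hsle (n+1))
    have hee : e ≤ e - a ⊓ (u - e) :=
      heL.2 (by rintro _ ⟨n, rfl⟩; exact le_sub_iff_add_le'.mpr (hstep n))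
    exact le_antisymm ((le_sub_self_iff e).mp hee) ht0
  have key3 : ∀ y : G, 0 ≤ y → y ⊓ a = 0 → y ⊓ e = 0 := by
    intro y hy hya
    have hS0 : ∀ n : ℕ, y ⊓ (n • a ⊓ u) = 0 := by
      intro n
      refine le_antisymm ?_ (le_inf hy (le_inf (nsmul_nonneg ha.1 n) hu0))
      calc y ⊓ (n • a ⊓ u) ≤ y ⊓ (n • a) := inf_le_inf_left y inf_le_left
        _ = 0 := aux_inf_nsmul hy ha.1 hya n
    have hsup : y ⊔ e ≤ y + e :=
      sup_le (le_add_of_nonneg_right heC.1) (le_add_of_nonneg_left hy)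
    have h2 : e ≤ -y + (y ⊔ e) := by
      refine heL.2 ?_
      rintro _ ⟨n, rfl⟩
      rw [le_neg_add_iff_add_le]
      have heq : y + (n • a ⊓ u) = y ⊔ (n • a ⊓ u) := by
        have h3 := inf_add_sup y (n • a ⊓ u)
        rw [hS0 n, zero_add] at h3
        exact h3.symm
      rw [heq]
      exact sup_le_sup_left (hsle n) y
    have hsupeq : y ⊔ e = y + e :=
      le_antisymm hsup (by rwa [le_neg_add_iff_add_le] at h2)
    have h4 := inf_add_sup y e
    rw [hsupeq] at h4
    exact add_right_cancel (h4.trans (zero_add (y+e)).symm)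
  have keye : e ⊓ (u - e) = 0 := by
    have hy0 : 0 ≤ e ⊓ (u - e) := le_inf heC.1 hue0
    have hya : (e ⊓ (u - e)) ⊓ a = 0 := by
      refine le_antisymm ?_ (le_inf hy0 ha.1)
      calc (e ⊓ (u - e)) ⊓ a ≤ (u - e) ⊓ a := inf_le_inf_right a inf_le_right
        _ = a ⊓ (u - e) := inf_comm _ _
        _ = 0 := key2
    have h := key3 _ hy0 hya
    rwa [inf_eq_left.mpr inf_le_left] at h
  -- the decomposition
  have hdec : ∀ x ∈ C, x ⊓ (u - e) ∈ polarIn C {a} ∧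
      x ⊓ e ∈ polarIn C (polarIn C {a}) ∧ x = oplus u (x ⊓ (u - e)) (x ⊓ e) := by
    intro x hx
    have hb0 : 0 ≤ x ⊓ (u - e) := le_inf hx.1 hue0
    have hc0 : 0 ≤ x ⊓ e := le_inf hx.1 heC.1
    refine ⟨⟨⟨hb0, inf_le_left.trans hx.2⟩, ?_⟩, ⟨⟨hc0, inf_le_left.trans hx.2⟩, ?_⟩, ?_⟩
    · intro z hz
      have hz' : z = a := hz
      rw [hz']
      refine le_antisymm ?_ (le_inf hb0 ha.1)
      calc (x ⊓ (u - e)) ⊓ a ≤ (u - e) ⊓ a := inf_le_inf_right a inf_le_right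
        _ = a ⊓ (u - e) := inf_comm _ _
        _ = 0 := key2
    · intro y hy
      have hye := key3 y hy.1.1 (hy.2 a rfl)
      refine le_antisymm ?_ (le_inf hc0 hy.1.1)
      calc (x ⊓ e) ⊓ y ≤ e ⊓ y := inf_le_inf_right y inf_le_right
        _ = y ⊓ e := inf_comm _ _
        _ = 0 := hye
    · have hdisj : (x ⊓ (u - e)) ⊓ (x ⊓ e) = 0 := by
        refine le_antisymm ?_ (le_inf hb0 hc0)
        calc (x ⊓ (u - e)) ⊓ (x ⊓ e) ≤ (u - e) ⊓ e := inf_le_inf inf_le_right inf_le_right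
          _ = e ⊓ (u - e) := inf_comm _ _
          _ = 0 := keye
      have h1 := inf_add_sup (x ⊓ (u - e)) (x ⊓ e)
      rw [hdisj, zero_add] at h1
      have h3 : (u - e) ⊔ e = u := by
        have h4 := inf_add_sup (u - e) e
        rw [inf_comm (u-e) e, keye, zero_add, sub_add_cancel] at h4
        exact h4
      have hsum : x ⊓ (u - e) + x ⊓ e = x := by
        rw [← h1, ← inf_sup_left, h3, inf_eq_left.mpr hx.2]
      show x = (x ⊓ (u - e) + x ⊓ e) ⊓ u
      rw [hsum, inf_eq_left.mpr hx.2]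
  have hCnormal : IsNormalIdealIn u C C := by
    refine ⟨⟨subset_rfl, ⟨0, le_refl (0:G), hu0⟩, fun x _ y hy _ => hy,
      fun x hx y hy => ⟨le_inf (add_nonneg hx.1 hy.1) hu0, inf_le_right⟩⟩, ?_⟩
    intro x _
    have hfe : (fun i => oplus u x i) = (fun i => oplus u i x) := by
      funext i; simp [oplus, add_comm]
    rw [hfe]
  refine ⟨?_, ?_, hI, polarIn C (polarIn C {a}), hJ, ?_, ?_⟩
  · apply Set.Subset.antisymm
    · rintro _ ⟨b, hb, c, hc, rfl⟩
      exact ⟨le_inf (add_nonneg hb.1.1 hc.1.1) hu0, inf_le_right⟩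
    · intro x hx
      obtain ⟨h1, h2, h3⟩ := hdec x hx
      exact ⟨_, h1, _, h2, h3.symm⟩
  · intro x hx
    obtain ⟨h1, h2, h3⟩ := hdec x hx
    exact ⟨_, h1, _, h2, h3⟩
  · ext x
    simp only [Set.mem_inter_iff, Set.mem_singleton_iff]
    constructor
    · rintro ⟨hxI, hxJ⟩
      have h := hxJ.2 x hxI
      rwa [inf_idem] at h
    · rintro rfl
      refine ⟨⟨⟨le_refl (0:G), hu0⟩, ?_⟩, ⟨⟨le_refl (0:G), hu0⟩, ?_⟩⟩
      · intro z hz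
        have hz' : z = a := hz
        rw [hz']
        exact inf_eq_left.mpr ha.1
      · intro z hz; exact inf_eq_left.mpr (hIC hz).1
  · apply Set.Subset.antisymm
    · exact Set.sInter_subset_of_mem ⟨hCnormal, Set.union_subset hIC hJC⟩
    · intro x hx
      refine Set.mem_sInter.mpr fun K hK => ?_
      obtain ⟨h1, h2, h3⟩ := hdec x hx
      rw [h3]
      exact hK.1.1.2.2.2 _ (hK.2 (Or.inl h1)) _ (hK.2 (Or.inr h2))
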